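/- arXiv:2208.09806 — 2 statements merged into one kernel-verified Lean document; each statement's English description precedes it below -/
import Mathlib

section
/- Let f : ℕ → ℂ be an arithmetic function and suppose there exist constants C > 0 and α ∈ (0,1) such that |S(x,t)| ≤ C·x^α for all real x ≥ 1 and all t ∈ ℝ. Then the Hausdorff dimension of the graph G(F) = {(t, |F(t)|) : t ∈ [0,1]} ⊂ ℝ² is at most 1 + α, and the same bound holds for the Hausdorff dimensions of the graphs {(t, Re F(t)) : t ∈ [0,1]} and {(t, Im F(t)) : t ∈ [0,1]}. -/
open Filter Finset Topology Complex
open scoped Real NNReal ENNReal MeasureTheory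

/-!
Besides the trivial bound `‖S(N,t) - S(N,s)‖ ≤ 2C N^α`, Abel summation against the weights
`e(n(t-s)) - 1` gives `‖S(N,t) - S(N,s)‖ ≤ 4πC N^(1+α) |t - s|`. Interpolating between them gives
`‖S(N,t) - S(N,s)‖ ≤ 4πC |t - s|^β N^(α+β)` for `β ∈ (0,1]`, and a second Abel summation against
the weights `1/n` shows that the partial sums of `F` are uniformly `β`-Hölder as soon as
`∑ n^(α+β-2)` converges, i.e. for every `β < 1 - α`. Then `|F|`, `Re F` and `Im F` are `β`-Hölder
as well, and the graph of a `β`-Hölder function on `[0,1]` is covered by `O(N^(2-β))` squares of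
side `1/N`, so its Hausdorff dimension is at most `2 - β`. Letting `β ↑ 1 - α` gives `1 + α`.
-/

theorem sum_Icc_mul_eq_sum_range_partialSum_mul {R : Type*} [Ring R] (a b : ℕ → R) (N : ℕ) :
    ∑ k ∈ Icc 1 N, a k * b k =
      ∑ k ∈ range N, (∑ j ∈ Icc 1 k, a j) * (b k - b (k + 1)) + (∑ j ∈ Icc 1 N, a j) * b N := by
  induction N with
  | zero => simp
  | succ N ih =>
    rw [sum_Icc_succ_top (by omega), ih, sum_range_succ, sum_Icc_succ_top (by omega)]
    noncomm_ring

theorem norm_sum_Icc_mul_le {R : Type*} [SeminormedRing R] {a b : ℕ → R} {A : ℕ → ℝ}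
    (hA : ∀ n, ‖∑ k ∈ Icc 1 n, a k‖ ≤ A n) (N : ℕ) :
    ‖∑ k ∈ Icc 1 N, a k * b k‖ ≤ ∑ k ∈ range N, A k * ‖b k - b (k + 1)‖ + A N * ‖b N‖ := by
  rw [sum_Icc_mul_eq_sum_range_partialSum_mul]
  refine (norm_add_le _ _).trans
    (add_le_add ((norm_sum_le _ _).trans (sum_le_sum fun k _ => ?_)) ?_)
  all_goals exact (norm_mul_le _ _).trans (mul_le_mul_of_nonneg_right (hA _) (norm_nonneg _))

theorem min_one_le_rpow {x β : ℝ} (hx : 0 ≤ x) (hβ0 : 0 ≤ β) (hβ1 : β ≤ 1) : min 1 x ≤ x ^ β := by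
  rcases le_total x 1 with h | h
  · exact (min_le_right _ _).trans (Real.self_le_rpow_of_le_one hx h hβ1)
  · exact (min_le_left _ _).trans (Real.one_le_rpow h hβ0)

theorem rpow_mul_norm_inv_sub_inv_le {p : ℝ} (hp : 0 < p) (k : ℕ) :
    (k : ℝ) ^ p * ‖(k : ℂ)⁻¹ - ((k + 1 : ℕ) : ℂ)⁻¹‖ ≤ (k : ℝ) ^ (p - 2) := by
  rcases k.eq_zero_or_pos with rfl | hk
  · simp [Real.zero_rpow hp.ne', Real.rpow_nonneg]
  have hk' : (0 : ℝ) < k := by exact_mod_cast hk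
  have hkC : (k : ℂ) ≠ 0 := by exact_mod_cast hk.ne'
  have hnorm : ‖(k : ℂ)⁻¹ - ((k + 1 : ℕ) : ℂ)⁻¹‖ = ((k : ℝ) * (k + 1))⁻¹ := by
    rw [show (k : ℂ)⁻¹ - ((k + 1 : ℕ) : ℂ)⁻¹ = (((k : ℝ) * (k + 1))⁻¹ : ℝ) by
      push_cast; field_simp; ring, norm_real, Real.norm_of_nonneg (by positivity)]
  rw [hnorm, Real.rpow_sub hk', Real.rpow_two, div_eq_mul_inv]
  gcongr
  nlinarith

theorem rpow_mul_norm_inv_natCast_le_one {p : ℝ} (hp : p ≤ 1) (N : ℕ) :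
    (N : ℝ) ^ p * ‖(N : ℂ)⁻¹‖ ≤ 1 := by
  rcases N.eq_zero_or_pos with rfl | hN
  · simp
  rw [norm_inv, norm_natCast]
  calc (N : ℝ) ^ p * (N : ℝ)⁻¹ ≤ N * (N : ℝ)⁻¹ := by
        gcongr
        exact Real.rpow_le_self_of_one_le (by exact_mod_cast hN) hp
    _ = 1 := mul_inv_cancel₀ (by positivity)

theorem norm_exp_two_pi_I_mul (x : ℝ) : ‖exp (2 * π * I * x)‖ = 1 := by
  rw [show 2 * π * I * x = ((2 * π * x : ℝ) : ℂ) * I by push_cast; ring]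
  exact norm_exp_ofReal_mul_I _

theorem norm_exp_two_pi_I_mul_sub_one_le (x : ℝ) :
    ‖exp (2 * π * I * x) - 1‖ ≤ 2 * π * |x| := by
  rw [show 2 * π * I * x = I * ((2 * π * x : ℝ) : ℂ) by push_cast; ring]
  refine Real.norm_exp_I_mul_ofReal_sub_one_le.trans_eq ?_
  rw [Real.norm_eq_abs, abs_mul, abs_of_pos Real.two_pi_pos]

theorem HolderWith.of_dist_le' {X Y : Type*} [PseudoMetricSpace X] [PseudoMetricSpace Y]
    {f : X → Y} {C : ℝ} {r : ℝ≥0} (h : ∀ x y, dist (f x) (f y) ≤ C * dist x y ^ (r : ℝ)) :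
    HolderWith C.toNNReal r f := by
  intro x y
  rw [edist_dist, edist_dist, ENNReal.ofReal_rpow_of_nonneg dist_nonneg r.coe_nonneg]
  exact (ENNReal.ofReal_le_ofReal (h x y)).trans_eq (ENNReal.ofReal_mul' (by positivity))

theorem ediam_prod_le {X Y : Type*} [PseudoEMetricSpace X] [PseudoEMetricSpace Y]
    (s : Set X) (t : Set Y) : Metric.ediam (s ×ˢ t) ≤ max (Metric.ediam s) (Metric.ediam t) :=
  Metric.ediam_le fun _ hp _ hq => max_le_max (Metric.edist_le_ediam_of_mem hp.1 hq.1)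
    (Metric.edist_le_ediam_of_mem hp.2 hq.2)

theorem natCast_mul_inv_natCast_rpow_le {m N : ℕ} {c d : ℝ} (hd : 0 ≤ d) (hN : 0 < N)
    (h : (m : ℝ) ≤ c * N ^ d) :
    (m : ℝ≥0∞) * ((N : ℝ≥0∞)⁻¹) ^ d ≤ ENNReal.ofReal c := by
  have hN' : (0 : ℝ) < N := by exact_mod_cast hN
  rw [← ENNReal.ofReal_natCast N, ← ENNReal.ofReal_inv_of_pos hN',
    ENNReal.ofReal_rpow_of_nonneg (by positivity) hd, ← ENNReal.ofReal_natCast m,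
    ← ENNReal.ofReal_mul m.cast_nonneg]
  refine ENNReal.ofReal_le_ofReal ?_
  rwa [Real.inv_rpow hN'.le, ← div_eq_mul_inv, div_le_iff₀ (by positivity)]

theorem dimH_le_of_card_cover_le {X : Type*} [EMetricSpace X] {s : Set X} {c d : ℝ} (hd : 0 ≤ d)
    (hcover : ∀ N : ℕ, 0 < N → ∃ T : Finset (Set X), s ⊆ ⋃ t ∈ T, t ∧
      (∀ t ∈ T, Metric.ediam t ≤ (N : ℝ≥0∞)⁻¹) ∧ (#T : ℝ) ≤ c * N ^ d) :
    dimH s ≤ ENNReal.ofReal d := by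
  have : ∀ N : ℕ, ∃ T : Finset (Set X), 0 < N → s ⊆ ⋃ t ∈ T, t ∧
      (∀ t ∈ T, Metric.ediam t ≤ (N : ℝ≥0∞)⁻¹) ∧ (#T : ℝ) ≤ c * N ^ d := fun N => by
    by_cases hN : 0 < N
    exacts [(hcover N hN).imp fun _ hT _ => hT, ⟨∅, fun h => absurd h hN⟩]
  choose T hT using this
  borelize X
  have hμ : μH[d] s ≤ ENNReal.ofReal c := by
    refine (MeasureTheory.Measure.hausdorffMeasure_le_liminf_sum d s (fun N : ℕ => (N : ℝ≥0∞)⁻¹)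
      ENNReal.tendsto_inv_nat_nhds_zero (fun N (t : T N) => (t : Set X)) ?_ ?_).trans ?_
    · filter_upwards [eventually_gt_atTop 0] with N hN
      exact fun t => (hT N hN).2.1 t t.2
    · filter_upwards [eventually_gt_atTop 0] with N hN x hx
      obtain ⟨t, ht, hxt⟩ := Set.mem_iUnion₂.mp ((hT N hN).1 hx)
      exact Set.mem_iUnion.mpr ⟨⟨t, ht⟩, hxt⟩
    refine liminf_le_of_frequently_le' (Eventually.frequently ?_)
    filter_upwards [eventually_gt_atTop 0] with N hN
    calc ∑ t : T N, Metric.ediam (t : Set X) ^ d ≤ ∑ _t : T N, ((N : ℝ≥0∞)⁻¹) ^ d := by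
          gcongr with t
          exact (hT N hN).2.1 t t.2
      _ ≤ ENNReal.ofReal c := by
          rw [sum_const, card_univ, Fintype.card_coe, nsmul_eq_mul]
          exact natCast_mul_inv_natCast_rpow_le hd hN (hT N hN).2.2
  rw [← Real.coe_toNNReal d hd] at hμ
  exact dimH_le_of_hausdorffMeasure_ne_top (ne_top_of_le_ne_top ENNReal.ofReal_ne_top hμ)

theorem exists_lt_mem_Icc_div {x : ℝ} {m n : ℕ} (hn : 0 < n) (hm : 0 < m) (hx0 : 0 ≤ x)
    (hxm : x ≤ m / n) : ∃ j < m, x ∈ Set.Icc (j / n : ℝ) ((j + 1) / n) := by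
  have hn' : (0 : ℝ) < n := by exact_mod_cast hn
  refine ⟨min ⌊x * n⌋₊ (m - 1), (min_le_right _ _).trans_lt (Nat.sub_lt hm one_pos), ?_, ?_⟩
  · rw [div_le_iff₀ hn']
    exact (Nat.cast_le.mpr (min_le_left _ _)).trans (Nat.floor_le (by positivity))
  · rcases le_total ⌊x * n⌋₊ (m - 1) with h | h
    · rw [min_eq_left h, le_div_iff₀ hn']
      exact (Nat.lt_floor_add_one _).le
    · rw [min_eq_right h, Nat.cast_sub hm, Nat.cast_one, sub_add_cancel]
      exact hxm

theorem natCast_mul_ceil_add_one_le {K β : ℝ} (hK : 0 ≤ K) (hβ : β ≤ 1) {N : ℕ} (hN : 0 < N) :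
    (N : ℝ) * (⌈2 * (K * N ^ (-β)) * N⌉₊ + 1 : ℕ) ≤ (2 * K + 2) * N ^ (2 - β) := by
  have hN' : (0 : ℝ) < N := by exact_mod_cast hN
  have hceil := Nat.ceil_lt_add_one (show 0 ≤ 2 * (K * N ^ (-β)) * N by positivity)
  have hpow : K * N ^ (-β) * N ^ 2 = K * N ^ (2 - β) := by
    rw [show 2 - β = -β + 2 by ring, Real.rpow_add hN', Real.rpow_two]
    ring
  have hN2 : (N : ℝ) ≤ N ^ (2 - β) :=
    Real.self_le_rpow_of_one_le (by exact_mod_cast hN) (by linarith)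
  calc (N : ℝ) * (⌈2 * (K * N ^ (-β)) * N⌉₊ + 1 : ℕ)
      ≤ N * (2 * (K * N ^ (-β)) * N + 2) := by
        push_cast
        exact mul_le_mul_of_nonneg_left (by linarith) hN'.le
    _ = 2 * (K * N ^ (-β) * N ^ 2) + 2 * N := by ring
    _ ≤ (2 * K + 2) * N ^ (2 - β) := by rw [hpow]; linarith

theorem dimH_graph_le_of_holderOnWith {g : ℝ → ℝ} {K β : ℝ≥0} (hβ1 : β ≤ 1)
    (hg : HolderOnWith K β g (Set.Icc 0 1)) :
    dimH {p : ℝ × ℝ | p.1 ∈ Set.Icc 0 1 ∧ p.2 = g p.1} ≤ ENNReal.ofReal (2 - β) := by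
  have hβ1' : (β : ℝ) ≤ 1 := hβ1
  refine dimH_le_of_card_cover_le (c := 2 * K + 2) (by linarith) fun N hN => ?_
  have hN' : (0 : ℝ) < N := by exact_mod_cast hN
  -- `h` bounds the oscillation of `g` over a column of width `1 / N`; column `i` is covered by
  -- `M` squares of side `1 / N` stacked upwards from height `y i`.
  set h : ℝ := K * (N : ℝ) ^ (-(β : ℝ))
  set M := ⌈2 * h * N⌉₊ + 1
  set y : ℕ → ℝ := fun i => g (i / N) - h
  set Q : ℕ × ℕ → Set (ℝ × ℝ) := fun ij => Set.Icc (ij.1 / N : ℝ) ((ij.1 + 1) / N) ×ˢ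
    Set.Icc (y ij.1 + ij.2 / N) (y ij.1 + (ij.2 + 1) / N)
  refine ⟨(range N ×ˢ range M).image Q, ?_, ?_, ?_⟩
  · rintro p ⟨hp1, hp2⟩
    obtain ⟨i, hi, hpi⟩ :=
      exists_lt_mem_Icc_div hN hN hp1.1 (by rw [div_self hN'.ne']; exact hp1.2)
    have hiI : (i / N : ℝ) ∈ Set.Icc 0 1 :=
      ⟨by positivity, (div_le_one hN').mpr (by exact_mod_cast hi.le)⟩
    have hosc : |g p.1 - g (i / N)| ≤ h := by
      have hdist : dist p.1 (i / N) ≤ (N : ℝ)⁻¹ :=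
        (Real.dist_le_of_mem_Icc hpi (Set.left_mem_Icc.mpr (by linarith [hpi.1, hpi.2]))).trans_eq
          (by ring)
      simpa only [Real.dist_eq, Real.inv_rpow hN'.le, ← Real.rpow_neg hN'.le]
        using hg.dist_le_of_le hp1 hiI hdist
    have hM : 2 * h ≤ M / N := by
      rw [le_div_iff₀ hN']
      exact (Nat.le_ceil _).trans (by exact_mod_cast Nat.le_succ _)
    have hpy : p.2 - y i ∈ Set.Icc 0 (2 * h) := by
      rw [abs_le] at hosc
      simp only [y, hp2]
      constructor <;> linarith
    obtain ⟨j, hj, hpj⟩ := exists_lt_mem_Icc_div hN (Nat.succ_pos _) hpy.1 (hpy.2.trans hM)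
    refine Set.mem_iUnion₂.mpr ⟨Q (i, j), mem_image_of_mem Q (mem_product.mpr
      ⟨mem_range.mpr hi, mem_range.mpr hj⟩), hpi, ?_, ?_⟩ <;> linarith [hpj.1, hpj.2]
  · simp only [forall_mem_image]
    rintro ⟨i, j⟩ -
    refine (ediam_prod_le _ _).trans (max_le ?_ ?_) <;>
    · rw [Real.ediam_Icc, ← ENNReal.ofReal_natCast, ← ENNReal.ofReal_inv_of_pos hN']
      exact ENNReal.ofReal_le_ofReal (le_of_eq (by ring))
  · calc (#((range N ×ˢ range M).image Q) : ℝ) ≤ N * M := by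
          exact_mod_cast card_image_le.trans (by rw [card_product, card_range, card_range])
      _ ≤ (2 * K + 2) * N ^ (2 - β : ℝ) := natCast_mul_ceil_add_one_le K.coe_nonneg hβ1' hN

noncomputable def expSum (f : ℕ → ℂ) (N : ℕ) (t : ℝ) : ℂ :=
  ∑ n ∈ Icc 1 N, f n * exp (2 * π * I * n * t)

section ExpSum

variable {f : ℕ → ℂ} {C α : ℝ}

theorem expSum_sub_expSum (N : ℕ) (t s : ℝ) :
    expSum f N t - expSum f N s =
      ∑ n ∈ Icc 1 N, f n * exp (2 * π * I * n * s) * (exp (2 * π * I * (n * (t - s) : ℝ)) - 1) := by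
  rw [expSum, expSum, ← sum_sub_distrib]
  refine sum_congr rfl fun n _ => ?_
  rw [mul_sub, mul_one, mul_assoc (f n), ← exp_add]
  congr 3
  push_cast
  ring

theorem norm_expSum_sub_le (hC : 0 ≤ C) (hα : 0 ≤ α) (hS : ∀ n t, ‖expSum f n t‖ ≤ C * n ^ α)
    (N : ℕ) (t s : ℝ) :
    ‖expSum f N t - expSum f N s‖ ≤ 4 * π * C * N ^ α * (N * |t - s|) := by
  set δ := t - s
  have hstep (k : ℕ) :
      ‖(exp (2 * π * I * (k * δ : ℝ)) - 1) - (exp (2 * π * I * ((k + 1 : ℕ) * δ : ℝ)) - 1)‖ ≤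
        2 * π * |δ| := by
    rw [sub_sub_sub_cancel_right, ← norm_neg, neg_sub,
      show 2 * π * I * ((k + 1 : ℕ) * δ : ℝ) = 2 * π * I * (k * δ : ℝ) + 2 * π * I * δ by
        push_cast; ring,
      exp_add, ← mul_sub_one, norm_mul, norm_exp_two_pi_I_mul, one_mul]
    exact norm_exp_two_pi_I_mul_sub_one_le δ
  have hlast : ‖exp (2 * π * I * (N * δ : ℝ)) - 1‖ ≤ 2 * π * (N * |δ|) := by
    simpa only [abs_mul, Nat.abs_cast] using norm_exp_two_pi_I_mul_sub_one_le (N * δ)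
  rw [expSum_sub_expSum]
  refine (norm_sum_Icc_mul_le (A := fun n => C * n ^ α) (fun n => hS n s) N).trans ?_
  calc ∑ k ∈ range N, C * (k : ℝ) ^ α *
          ‖(exp (2 * π * I * (k * δ : ℝ)) - 1) - (exp (2 * π * I * ((k + 1 : ℕ) * δ : ℝ)) - 1)‖
        + C * (N : ℝ) ^ α * ‖exp (2 * π * I * (N * δ : ℝ)) - 1‖
      ≤ ∑ k ∈ range N, C * (N : ℝ) ^ α * (2 * π * |δ|) + C * N ^ α * (2 * π * (N * |δ|)) := by
        gcongr with k hk
        · exact_mod_cast (mem_range.mp hk).le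
        · exact hstep k
    _ = 4 * π * C * N ^ α * (N * |δ|) := by rw [sum_const, card_range, nsmul_eq_mul]; ring

theorem norm_expSum_sub_le_rpow (hC : 0 ≤ C) (hα : 0 ≤ α)
    (hS : ∀ n t, ‖expSum f n t‖ ≤ C * n ^ α) {β : ℝ} (hβ0 : 0 < β) (hβ1 : β ≤ 1)
    (N : ℕ) (t s : ℝ) :
    ‖expSum f N t - expSum f N s‖ ≤ 4 * π * C * |t - s| ^ β * N ^ (α + β) := by
  have hmin : ‖expSum f N t - expSum f N s‖ ≤ 4 * π * C * N ^ α * min 1 (N * |t - s|) := by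
    rw [mul_min_of_nonneg _ _ (by positivity), mul_one]
    refine le_min ?_ (norm_expSum_sub_le hC hα hS N t s)
    calc ‖expSum f N t - expSum f N s‖ ≤ C * N ^ α + C * N ^ α :=
          (norm_sub_le _ _).trans (add_le_add (hS N t) (hS N s))
      _ ≤ 4 * π * C * N ^ α := by
          nlinarith [Real.pi_gt_three, mul_nonneg hC (Real.rpow_nonneg N.cast_nonneg α)]
  calc ‖expSum f N t - expSum f N s‖ ≤ 4 * π * C * N ^ α * min 1 (N * |t - s|) := hmin
    _ ≤ 4 * π * C * N ^ α * (N * |t - s|) ^ β := by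
        gcongr
        exact min_one_le_rpow (by positivity) hβ0.le hβ1
    _ = 4 * π * C * |t - s| ^ β * N ^ (α + β) := by
        rw [Real.mul_rpow N.cast_nonneg (abs_nonneg _),
          Real.rpow_add' N.cast_nonneg (by positivity)]
        ring

theorem norm_expSum_div_sub_le (hC : 0 ≤ C) (hα : 0 ≤ α)
    (hS : ∀ n t, ‖expSum f n t‖ ≤ C * n ^ α) {β : ℝ} (hβ0 : 0 < β) (hαβ : α + β < 1)
    (N : ℕ) (t s : ℝ) :
    ‖expSum (fun n => f n / n) N t - expSum (fun n => f n / n) N s‖ ≤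
      4 * π * C * (∑' n : ℕ, (n : ℝ) ^ (α + β - 2) + 1) * |t - s| ^ β := by
  set c := 4 * π * C * |t - s| ^ β
  have hsplit : expSum (fun n => f n / n) N t - expSum (fun n => f n / n) N s =
      ∑ n ∈ Icc 1 N, f n * (exp (2 * π * I * n * t) - exp (2 * π * I * n * s)) * (n : ℂ)⁻¹ := by
    rw [expSum, expSum, ← sum_sub_distrib]
    exact sum_congr rfl fun n _ => by ring
  have hpartial (n : ℕ) :
      ‖∑ k ∈ Icc 1 n, f k * (exp (2 * π * I * k * t) - exp (2 * π * I * k * s))‖ ≤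
        c * n ^ (α + β) := by
    simpa only [expSum, mul_sub, sum_sub_distrib] using
      norm_expSum_sub_le_rpow hC hα hS hβ0 (by linarith) n t s
  have hsum : Summable fun n : ℕ => (n : ℝ) ^ (α + β - 2) :=
    Real.summable_nat_rpow.mpr (by linarith)
  rw [hsplit]
  refine (norm_sum_Icc_mul_le hpartial N).trans ?_
  calc ∑ k ∈ range N, c * (k : ℝ) ^ (α + β) * ‖(k : ℂ)⁻¹ - ((k + 1 : ℕ) : ℂ)⁻¹‖
        + c * (N : ℝ) ^ (α + β) * ‖((N : ℕ) : ℂ)⁻¹‖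
      ≤ ∑ k ∈ range N, c * (k : ℝ) ^ (α + β - 2) + c * 1 := by
        simp only [mul_assoc]
        gcongr with k
        · exact rpow_mul_norm_inv_sub_inv_le (by linarith) k
        · exact rpow_mul_norm_inv_natCast_le_one hαβ.le N
    _ ≤ c * ∑' n : ℕ, (n : ℝ) ^ (α + β - 2) + c := by
        rw [← mul_sum, mul_one]
        gcongr
        exact hsum.sum_le_tsum _ fun n _ => Real.rpow_nonneg n.cast_nonneg _
    _ = 4 * π * C * (∑' n : ℕ, (n : ℝ) ^ (α + β - 2) + 1) * |t - s| ^ β := by ring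

theorem holderWith_of_tendsto_expSum (hC : 0 ≤ C) (hα : 0 ≤ α)
    (hS : ∀ n t, ‖expSum f n t‖ ≤ C * n ^ α) {F : ℝ → ℂ}
    (hF : ∀ t, Tendsto (fun N => expSum (fun n => f n / n) N t) atTop (𝓝 (F t)))
    {β : ℝ≥0} (hβ0 : 0 < β) (hαβ : α + β < 1) : ∃ K, HolderWith K β F :=
  ⟨_, HolderWith.of_dist_le' fun t s => by
    rw [dist_eq_norm, Real.dist_eq]
    exact le_of_tendsto ((hF t).sub (hF s)).norm (Eventually.of_forall fun N =>
      norm_expSum_div_sub_le hC hα hS (NNReal.coe_pos.mpr hβ0) hαβ N t s)⟩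

theorem dimH_graph_comp_le_of_tendsto_expSum (hC : 0 ≤ C) (hα : 0 ≤ α) (hα1 : α < 1)
    (hS : ∀ n t, ‖expSum f n t‖ ≤ C * n ^ α) {F : ℝ → ℂ}
    (hF : ∀ t, Tendsto (fun N => expSum (fun n => f n / n) N t) atTop (𝓝 (F t)))
    {ψ : ℂ → ℝ} (hψ : LipschitzWith 1 ψ) :
    dimH {p : ℝ × ℝ | p.1 ∈ Set.Icc 0 1 ∧ p.2 = ψ (F p.1)} ≤ ENNReal.ofReal (1 + α) := by
  have hlim : Tendsto (fun β : ℝ => ENNReal.ofReal (2 - β)) (𝓝[<] (1 - α))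
      (𝓝 (ENNReal.ofReal (1 + α))) := by
    have : Continuous fun β : ℝ => ENNReal.ofReal (2 - β) :=
      ENNReal.continuous_ofReal.comp (continuous_const.sub continuous_id)
    convert this.continuousAt.tendsto.mono_left nhdsWithin_le_nhds using 3
    ring
  refine ge_of_tendsto hlim ?_
  filter_upwards [Ioo_mem_nhdsLT (by linarith : 0 < 1 - α)] with β ⟨hβ0, hβ1⟩
  obtain ⟨K, hK⟩ := holderWith_of_tendsto_expSum hC hα hS hF (β := β.toNNReal)
    (Real.toNNReal_pos.mpr hβ0) (by rw [Real.coe_toNNReal _ hβ0.le]; linarith)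
  have hψF : HolderWith K β.toNNReal (ψ ∘ F) := by
    simpa using (holderWith_one.mpr hψ).comp hK
  have hgraph := dimH_graph_le_of_holderOnWith (Real.toNNReal_le_one.mpr (by linarith))
    (hψF.holderOnWith (Set.Icc 0 1))
  rwa [Real.coe_toNNReal _ hβ0.le] at hgraph

end ExpSum

/-- Under the uniform exponential sum bound `|S(x,t)| ≤ C x^α`, the Hausdorff
dimensions of the graphs of `|F|`, `Re F`, `Im F` over `[0,1]` are at most `1 + α`. -/
theorem stmt_4 (f : ℕ → ℂ) (C α : ℝ) (hC : 0 < C) (hα0 : 0 < α) (hα1 : α < 1)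
    (hS : ∀ x : ℝ, 1 ≤ x → ∀ t : ℝ,
      ‖∑ n ∈ Finset.Icc 1 ⌊x⌋₊,
        f n * Complex.exp (2 * Real.pi * Complex.I * (n : ℂ) * (t : ℂ))‖ ≤ C * x ^ α)
    (F : ℝ → ℂ)
    (hF : ∀ t : ℝ, Tendsto (fun N : ℕ => ∑ n ∈ Finset.Icc 1 N,
        f n * Complex.exp (2 * Real.pi * Complex.I * (n : ℂ) * (t : ℂ)) / (n : ℂ))
      atTop (𝓝 (F t))) :
    dimH {p : ℝ × ℝ | p.1 ∈ Set.Icc (0 : ℝ) 1 ∧ p.2 = ‖F p.1‖}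
        ≤ ENNReal.ofReal (1 + α) ∧
    dimH {p : ℝ × ℝ | p.1 ∈ Set.Icc (0 : ℝ) 1 ∧ p.2 = (F p.1).re}
        ≤ ENNReal.ofReal (1 + α) ∧
    dimH {p : ℝ × ℝ | p.1 ∈ Set.Icc (0 : ℝ) 1 ∧ p.2 = (F p.1).im}
        ≤ ENNReal.ofReal (1 + α) := by
  have hS' (N : ℕ) (t : ℝ) : ‖expSum f N t‖ ≤ C * N ^ α := by
    rcases N.eq_zero_or_pos with rfl | hN
    · simp [expSum, Real.zero_rpow hα0.ne']
    · simpa only [Nat.floor_natCast, expSum] using hS N (by exact_mod_cast hN) t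
  have hF' (t : ℝ) : Tendsto (fun N => expSum (fun n => f n / n) N t) atTop (𝓝 (F t)) := by
    simpa only [expSum, mul_div_right_comm] using hF t
  exact ⟨dimH_graph_comp_le_of_tendsto_expSum hC.le hα0.le hα1 hS' hF' lipschitzWith_one_norm,
    dimH_graph_comp_le_of_tendsto_expSum hC.le hα0.le hα1 hS' hF' RCLike.lipschitzWith_re,
    dimH_graph_comp_le_of_tendsto_expSum hC.le hα0.le hα1 hS' hF' RCLike.lipschitzWith_im⟩
end

section
/- Let f : ℕ → ℂ be a bounded function. Then the series R(f;t) = Σ_{n=1}^∞ f(n)e^{2πi n² t}/n² converges for every t ∈ ℝ, and R(f;·) is Hölder continuous with exponent 1/2: there exists a constant C₁ > 0 such that |R(f;s) − R(f;t)| ≤ C₁·|s−t|^{1/2} for all s, t ∈ ℝ. Moreover, the same Hölder estimate holds for the real-valued functions t ↦ |R(f;t)|, t ↦ Re R(f;t), and t ↦ Im R(f;t). -/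
open Filter Finset Topology

/-! Each term `f n e^{2πi n² t} / n²` is `2πB`-Lipschitz in `t` (the factor `n²` from the phase
cancels the denominator) and bounded by `B / n²`. For `|s - t| = h`, using the Lipschitz bound for
the first `N ≈ h^{-1/2}` terms and the size bound on the tail gives `N h + 1/N ≲ h^{1/2}`. Norm,
real and imaginary part are `1`-Lipschitz, so they inherit the estimate. -/

lemma summable_inv_nat_add_sq (N : ℝ) (hN : 0 ≤ N) :
    Summable fun n : ℕ => (((n : ℝ) + N + 1) ^ 2)⁻¹ := by
  refine (summable_nat_add_iff (f := fun n : ℕ => ((n : ℝ) ^ 2)⁻¹) 1).2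
      (Real.summable_nat_pow_inv.2 one_lt_two)
    |>.of_nonneg_of_le (fun n => by positivity) fun n => ?_
  push_cast
  gcongr
  linarith

lemma summable_div_nat_add_one_sq (b : ℝ) : Summable fun n : ℕ => b / ((n : ℝ) + 1) ^ 2 := by
  simpa [div_eq_mul_inv] using (summable_inv_nat_add_sq 0 le_rfl).mul_left b

lemma tsum_inv_nat_add_sq_le (N : ℕ) :
    ∑' n : ℕ, (((n : ℝ) + N + 1) ^ 2)⁻¹ ≤ (2 : ℝ) / (N + 1) := by
  refine Summable.tsum_le_of_sum_range_le (summable_inv_nat_add_sq N N.cast_nonneg) fun m => ?_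
  have hreindex : ∑ n ∈ range m, (((n : ℝ) + N + 1) ^ 2)⁻¹
      = ∑ i ∈ Ioo N (N + 1 + m), ((i : ℝ) ^ 2)⁻¹ := by
    rw [← Finset.Ico_add_one_left_eq_Ioo, sum_Ico_eq_sum_range, Nat.add_sub_cancel_left]
    exact sum_congr rfl fun n _ => by push_cast; ring
  exact hreindex ▸ sum_Ioo_inv_sq_le N _

lemma tsum_le_three_mul_sqrt_of_le_of_le_div_sq {d : ℕ → ℝ} {a b : ℝ} (hd : ∀ n, 0 ≤ d n)
    (hda : ∀ n, d n ≤ a) (hdb : ∀ n, d n ≤ b / ((n : ℝ) + 1) ^ 2) :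
    ∑' n, d n ≤ 3 * √(a * b) := by
  rcases ((hd 0).trans (hda 0)).eq_or_lt with rfl | ha
  · simpa using tsum_nonpos hda
  have hb : 0 ≤ b := (hd 0).trans (by simpa using hdb 0)
  -- split the sum where the two bounds cross, `a = b / n²`
  set x := √(b / a)
  set N := ⌊x⌋₊
  have hsqrt : √(a * b) = x * a := by
    rw [show a * b = b / a * a ^ 2 by field_simp, Real.sqrt_mul (by positivity), Real.sqrt_sq ha.le]
  have hxxa : x * (x * a) = b := by
    rw [← mul_assoc, Real.mul_self_sqrt (by positivity)]
    field_simp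
  have hsum : Summable d := (summable_div_nat_add_one_sq b).of_nonneg_of_le hd hdb
  have hhead : ∑ n ∈ range N, d n ≤ x * a := by
    calc ∑ n ∈ range N, d n ≤ N * a := by
          simpa using Finset.sum_le_card_nsmul (range N) d a fun n _ => hda n
      _ ≤ x * a := by gcongr; exact Nat.floor_le (Real.sqrt_nonneg _)
  have htail : ∑' n, d (n + N) ≤ 2 * (x * a) := by
    calc ∑' n, d (n + N) ≤ ∑' n : ℕ, b * (((n : ℝ) + N + 1) ^ 2)⁻¹ := by
          refine Summable.tsum_le_tsum (fun n => ?_) ((summable_nat_add_iff N).2 hsum)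
            ((summable_inv_nat_add_sq N N.cast_nonneg).mul_left b)
          simpa [div_eq_mul_inv, add_assoc] using hdb (n + N)
      _ = b * ∑' n : ℕ, (((n : ℝ) + N + 1) ^ 2)⁻¹ := tsum_mul_left
      _ ≤ b * (2 / (N + 1)) := by gcongr; exact tsum_inv_nat_add_sq_le N
      _ ≤ 2 * (x * a) := by
          rw [mul_div_assoc', div_le_iff₀ (by positivity)]
          nlinarith [mul_le_mul_of_nonneg_right (Nat.lt_floor_add_one x).le
            (by positivity : 0 ≤ x * a)]
  rw [← hsum.sum_add_tsum_nat_add N, hsqrt]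
  linarith

lemma Complex.norm_exp_I_mul_ofReal_sub_exp_I_mul_ofReal_le (x y : ℝ) :
    ‖Complex.exp (Complex.I * x) - Complex.exp (Complex.I * y)‖ ≤ |x - y| := by
  have : Complex.exp (Complex.I * x) - Complex.exp (Complex.I * y)
      = Complex.exp (Complex.I * y) * (Complex.exp (Complex.I * ↑(x - y)) - 1) := by
    rw [mul_sub, ← Complex.exp_add]; push_cast; ring_nf
  rw [this, norm_mul, Complex.norm_exp_I_mul_ofReal, one_mul]
  exact Real.norm_exp_I_mul_ofReal_sub_one_le

noncomputable def riemannTerm (f : ℕ → ℂ) (n : ℕ) (t : ℝ) : ℂ :=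
  f n * Complex.exp (2 * Real.pi * Complex.I * ((n : ℂ) ^ 2) * (t : ℂ)) / ((n : ℂ) ^ 2)

noncomputable def riemannFun (f : ℕ → ℂ) (t : ℝ) : ℂ :=
  ∑' n, riemannTerm f (n + 1) t

section

variable {f : ℕ → ℂ} {B : ℝ}

lemma riemannTerm_eq (n : ℕ) (t : ℝ) :
    riemannTerm f n t
      = f n / (n : ℂ) ^ 2 * Complex.exp (Complex.I * ((2 * Real.pi * n ^ 2 * t : ℝ) : ℂ)) := by
  rw [riemannTerm]; push_cast; ring_nf

lemma norm_riemannTerm_le {n : ℕ} (hf : ‖f n‖ ≤ B) (t : ℝ) :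
    ‖riemannTerm f n t‖ ≤ B / (n : ℝ) ^ 2 := by
  rw [riemannTerm_eq, norm_mul, Complex.norm_exp_I_mul_ofReal, mul_one, norm_div, norm_pow,
    Complex.norm_natCast]
  gcongr

lemma norm_riemannTerm_sub_le {n : ℕ} (hn : n ≠ 0) (hf : ‖f n‖ ≤ B) (s t : ℝ) :
    ‖riemannTerm f n s - riemannTerm f n t‖ ≤ 2 * Real.pi * B * |s - t| := by
  have hn2 : (0 : ℝ) < (n : ℝ) ^ 2 := by positivity
  rw [riemannTerm_eq, riemannTerm_eq, ← mul_sub, norm_mul, norm_div, norm_pow, Complex.norm_natCast]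
  calc ‖f n‖ / (n : ℝ) ^ 2 * ‖_‖
      ≤ B / (n : ℝ) ^ 2 * |2 * Real.pi * n ^ 2 * s - 2 * Real.pi * n ^ 2 * t| := by
        gcongr
        · exact div_nonneg ((norm_nonneg _).trans hf) hn2.le
        · exact Complex.norm_exp_I_mul_ofReal_sub_exp_I_mul_ofReal_le _ _
    _ = 2 * Real.pi * B * |s - t| := by
        rw [← mul_sub, abs_mul, abs_of_pos (by positivity)]
        field_simp

lemma summable_riemannTerm (hf : ∀ n, ‖f n‖ ≤ B) (t : ℝ) :
    Summable fun n => riemannTerm f (n + 1) t := by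
  refine .of_norm_bounded (summable_div_nat_add_one_sq B) fun n => ?_
  simpa using norm_riemannTerm_le (hf (n + 1)) t

lemma tendsto_sum_Icc_riemannTerm (hf : ∀ n, ‖f n‖ ≤ B) (t : ℝ) :
    Tendsto (fun N => ∑ n ∈ Icc 1 N, riemannTerm f n t) atTop (𝓝 (riemannFun f t)) := by
  have hIcc (N : ℕ) :
      ∑ n ∈ Icc 1 N, riemannTerm f n t = ∑ n ∈ range N, riemannTerm f (n + 1) t := by
    rw [← Finset.Ico_add_one_right_eq_Icc, sum_Ico_eq_sum_range, Nat.add_sub_cancel]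
    simp only [add_comm 1]
  simpa only [hIcc, riemannFun] using (summable_riemannTerm hf t).hasSum.tendsto_sum_nat

lemma norm_riemannFun_sub_le (hf : ∀ n, ‖f n‖ ≤ B) (s t : ℝ) :
    ‖riemannFun f s - riemannFun f t‖ ≤ 6 * Real.pi * B * √|s - t| := by
  have hB : 0 ≤ B := (norm_nonneg _).trans (hf 0)
  have hbound (n : ℕ) : ‖riemannTerm f (n + 1) s - riemannTerm f (n + 1) t‖
      ≤ 2 * Real.pi * B / ((n : ℝ) + 1) ^ 2 :=
    calc _ ≤ ‖riemannTerm f (n + 1) s‖ + ‖riemannTerm f (n + 1) t‖ := norm_sub_le _ _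
      _ ≤ B / ((n + 1 : ℕ) : ℝ) ^ 2 + B / ((n + 1 : ℕ) : ℝ) ^ 2 :=
        add_le_add (norm_riemannTerm_le (hf _) s) (norm_riemannTerm_le (hf _) t)
      _ ≤ 2 * Real.pi * B / ((n : ℝ) + 1) ^ 2 := by
        push_cast
        rw [← add_div]
        gcongr
        nlinarith [Real.pi_gt_three]
  have hsqrt :
      √(2 * Real.pi * B * |s - t| * (2 * Real.pi * B)) = 2 * Real.pi * B * √|s - t| := by
    rw [show 2 * Real.pi * B * |s - t| * (2 * Real.pi * B) = (2 * Real.pi * B) ^ 2 * |s - t| by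
      ring,
      Real.sqrt_mul (by positivity), Real.sqrt_sq (by positivity)]
  calc ‖riemannFun f s - riemannFun f t‖
      = ‖∑' n, (riemannTerm f (n + 1) s - riemannTerm f (n + 1) t)‖ := by
        rw [riemannFun, riemannFun,
          (summable_riemannTerm hf s).tsum_sub (summable_riemannTerm hf t)]
    _ ≤ ∑' n, ‖riemannTerm f (n + 1) s - riemannTerm f (n + 1) t‖ :=
        norm_tsum_le_tsum_norm <|
          (summable_div_nat_add_one_sq _).of_nonneg_of_le (fun n => norm_nonneg _) hbound
    _ ≤ 3 * √(2 * Real.pi * B * |s - t| * (2 * Real.pi * B)) :=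
        tsum_le_three_mul_sqrt_of_le_of_le_div_sq (fun n => norm_nonneg _)
          (fun n => norm_riemannTerm_sub_le n.succ_ne_zero (hf _) s t) hbound
    _ = 6 * Real.pi * B * √|s - t| := by rw [hsqrt]; ring

end

/-- For bounded `f : ℕ → ℂ`, the generalized Riemann series
`R(f;t) = ∑ f(n) e^{2πi n² t}/n²` converges and is Hölder continuous with exponent `1/2`,
and likewise for its absolute value, real part, and imaginary part. -/
theorem stmt_13 (f : ℕ → ℂ) (B : ℝ) (hf : ∀ n : ℕ, ‖f n‖ ≤ B) :
    ∃ R : ℝ → ℂ,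
      (∀ t : ℝ, Tendsto (fun N : ℕ => ∑ n ∈ Finset.Icc 1 N,
          f n * Complex.exp (2 * Real.pi * Complex.I * ((n : ℂ) ^ 2) * (t : ℂ)) / ((n : ℂ) ^ 2))
        atTop (𝓝 (R t))) ∧
      ∃ C₁ : ℝ, 0 < C₁ ∧
        (∀ s t : ℝ, ‖R s - R t‖ ≤ C₁ * |s - t| ^ ((1 : ℝ) / 2)) ∧
        (∀ s t : ℝ, |‖R s‖ - ‖R t‖| ≤ C₁ * |s - t| ^ ((1 : ℝ) / 2)) ∧
        (∀ s t : ℝ, |(R s).re - (R t).re| ≤ C₁ * |s - t| ^ ((1 : ℝ) / 2)) ∧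
        (∀ s t : ℝ, |(R s).im - (R t).im| ≤ C₁ * |s - t| ^ ((1 : ℝ) / 2)) := by
  have hB : 0 ≤ B := (norm_nonneg _).trans (hf 0)
  have holder (s t : ℝ) :
      ‖riemannFun f s - riemannFun f t‖ ≤ (6 * Real.pi * B + 1) * |s - t| ^ ((1 : ℝ) / 2) := by
    rw [← Real.sqrt_eq_rpow]
    exact (norm_riemannFun_sub_le hf s t).trans (by gcongr; linarith)
  refine ⟨riemannFun f, tendsto_sum_Icc_riemannTerm hf, 6 * Real.pi * B + 1, by positivity, holder,
    fun s t => ?_, fun s t => ?_, fun s t => ?_⟩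
  · exact (abs_norm_sub_norm_le _ _).trans (holder s t)
  · exact (Complex.sub_re _ _ ▸ Complex.abs_re_le_norm _).trans (holder s t)
  · exact (Complex.sub_im _ _ ▸ Complex.abs_im_le_norm _).trans (holder s t)
end
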